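/- The function g̃₁(ρ) = (12ρ³·arctanh ρ − 9ρ² − 1)/(ρ³·(ρ² + 1)) satisfies (ρ² − 1)·g̃₁''(ρ) + (6ρ − 4/ρ)·g̃₁'(ρ) + 6·g̃₁(ρ) − (16/(1 + ρ²)²)·g̃₁(ρ) = 0 for all ρ ∈ (0,1), and with g₁(ρ) = 1/(1 + ρ²) the Wronskian satisfies g₁(ρ)·g̃₁'(ρ) − g₁'(ρ)·g̃₁(ρ) = 3/(ρ⁴·(1 − ρ²)) for all ρ ∈ (0,1). -/

import Mathlib

/-!
Reduction of order. Writing `g̃₁ = g₁ q` with `q ρ = 12 arctanh ρ - 9/ρ - 1/ρ³`, one computes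
`q' = W / g₁²` for `W = 3/(ρ⁴(1 - ρ²))`, so the Wronskian `g₁ g̃₁' - g₁' g̃₁ = g₁² q'` equals `W`.
By the Leibniz rule the operator applied to `g₁ q` is `q` times the operator applied to `g₁`,
which vanishes, plus `g₁⁻¹((ρ² - 1) W' + (6ρ - 4/ρ) W)`, which vanishes because `W` solves Abel's
equation.
-/

open Set

noncomputable def arctanh (x : ℝ) : ℝ := (1 / 2) * Real.log ((1 + x) / (1 - x))

open Filter

theorem hasDerivAt_arctanh {x : ℝ} (hx : x ∈ Ioo (-1 : ℝ) 1) :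
    HasDerivAt arctanh (1 / (1 - x ^ 2)) x := by
  obtain ⟨hl, hr⟩ := hx
  have hquot : HasDerivAt (fun y => (1 + y) / (1 - y)) (2 / (1 - x) ^ 2) x :=
    (((hasDerivAt_id x).const_add 1).div ((hasDerivAt_id x).const_sub 1)
      (sub_ne_zero.2 hr.ne')).congr_deriv (by simp only [id]; ring)
  refine ((hquot.log (div_pos (by linarith) (by linarith)).ne').const_mul (1 / 2)).congr_deriv ?_
  have : 1 - x ≠ 0 := by linarith
  have : 1 + x ≠ 0 := by linarith
  have : 1 - x ^ 2 ≠ 0 := by nlinarith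
  field_simp
  ring

theorem deriv_and_deriv_deriv_mul {𝕜 : Type*} [NontriviallyNormedField 𝕜] {s : Set 𝕜} (hs : IsOpen s)
    {f f' f'' g g' g'' : 𝕜 → 𝕜}
    (hf : ∀ x ∈ s, HasDerivAt f (f' x) x) (hf' : ∀ x ∈ s, HasDerivAt f' (f'' x) x)
    (hg : ∀ x ∈ s, HasDerivAt g (g' x) x) (hg' : ∀ x ∈ s, HasDerivAt g' (g'' x) x)
    {x : 𝕜} (hx : x ∈ s) :
    deriv (f * g) x = f' x * g x + f x * g' x ∧
      deriv (deriv (f * g)) x = f'' x * g x + 2 * (f' x * g' x) + f x * g'' x := by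
  have hfg : ∀ y ∈ s, deriv (f * g) y = f' y * g y + f y * g' y := fun y hy =>
    ((hf y hy).mul (hg y hy)).deriv
  refine ⟨hfg x hx, ?_⟩
  rw [(eventuallyEq_of_mem (hs.mem_nhds hx) hfg).deriv_eq]
  exact (((hf' x hx).mul (hg x hx)).add ((hf x hx).mul (hg' x hx))).deriv.trans (by ring)

noncomputable section

def firstSolution (ρ : ℝ) : ℝ := 1 / (1 + ρ ^ 2)

def firstSolution' (ρ : ℝ) : ℝ := -2 * ρ / (1 + ρ ^ 2) ^ 2

def firstSolution'' (ρ : ℝ) : ℝ := (6 * ρ ^ 2 - 2) / (1 + ρ ^ 2) ^ 3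

def reductionFactor (ρ : ℝ) : ℝ := 12 * arctanh ρ - 9 / ρ - 1 / ρ ^ 3

def reductionFactor' (ρ : ℝ) : ℝ := 12 / (1 - ρ ^ 2) + 9 / ρ ^ 2 + 3 / ρ ^ 4

def reductionFactor'' (ρ : ℝ) : ℝ := 24 * ρ / (1 - ρ ^ 2) ^ 2 - 18 / ρ ^ 3 - 12 / ρ ^ 5

/-- `u`, `u'`, `u''` stand for the values at `ρ` of a function and its first two derivatives. -/
def spectralOperator (ρ u u' u'' : ℝ) : ℝ :=
  (ρ ^ 2 - 1) * u'' + (6 * ρ - 4 / ρ) * u' + 6 * u - 16 / (1 + ρ ^ 2) ^ 2 * u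

end

theorem hasDerivAt_firstSolution (x : ℝ) : HasDerivAt firstSolution (firstSolution' x) x :=
  ((hasDerivAt_const x (1 : ℝ)).div ((hasDerivAt_pow 2 x).const_add 1)
    (by positivity)).congr_deriv (by unfold firstSolution'; push_cast; ring)

theorem hasDerivAt_firstSolution' (x : ℝ) : HasDerivAt firstSolution' (firstSolution'' x) x := by
  refine (((hasDerivAt_id' x).const_mul (-2)).div
    (((hasDerivAt_pow 2 x).const_add 1).fun_pow 2) (by positivity)).congr_deriv ?_
  unfold firstSolution''
  field_simp
  push_cast
  ring

theorem hasDerivAt_reductionFactor {x : ℝ} (hx : x ∈ Ioo (-1 : ℝ) 1) (hx0 : x ≠ 0) :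
    HasDerivAt reductionFactor (reductionFactor' x) x := by
  have : 1 - x ^ 2 ≠ 0 := by nlinarith [hx.1, hx.2]
  refine ((((hasDerivAt_arctanh hx).const_mul 12).sub
    ((hasDerivAt_const x (9 : ℝ)).div (hasDerivAt_id' x) hx0)).sub
    ((hasDerivAt_const x (1 : ℝ)).div (hasDerivAt_pow 3 x) (pow_ne_zero 3 hx0))).congr_deriv ?_
  unfold reductionFactor'
  field_simp
  push_cast
  ring

theorem hasDerivAt_reductionFactor' {x : ℝ} (hx0 : x ≠ 0) (hx1 : 1 - x ^ 2 ≠ 0) :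
    HasDerivAt reductionFactor' (reductionFactor'' x) x := by
  refine ((((hasDerivAt_const x (12 : ℝ)).div ((hasDerivAt_pow 2 x).const_sub 1) hx1).add
    ((hasDerivAt_const x (9 : ℝ)).div (hasDerivAt_pow 2 x) (pow_ne_zero 2 hx0))).add
    ((hasDerivAt_const x (3 : ℝ)).div (hasDerivAt_pow 4 x) (pow_ne_zero 4 hx0))).congr_deriv ?_
  unfold reductionFactor''
  field_simp
  push_cast
  ring

-- At `ρ = 0` both sides are `0`, thanks to the junk values `arctanh 0 = 0` and `1 / 0 = 0`.
theorem firstSolution_mul_reductionFactor :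
    firstSolution * reductionFactor =
      fun ρ => (12 * ρ ^ 3 * arctanh ρ - 9 * ρ ^ 2 - 1) / (ρ ^ 3 * (ρ ^ 2 + 1)) := by
  ext ρ
  rcases eq_or_ne ρ 0 with rfl | hρ
  · simp [firstSolution, reductionFactor, arctanh]
  · simp only [Pi.mul_apply, firstSolution, reductionFactor]
    field_simp
    ring

theorem firstSolution_sq_mul_reductionFactor' {ρ : ℝ} (hρ0 : ρ ≠ 0) (hρ1 : 1 - ρ ^ 2 ≠ 0) :
    firstSolution ρ ^ 2 * reductionFactor' ρ = 3 / (ρ ^ 4 * (1 - ρ ^ 2)) := by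
  unfold firstSolution reductionFactor'
  field_simp
  ring

theorem spectralOperator_mul (ρ g g' g'' q q' q'' : ℝ) :
    spectralOperator ρ (g * q) (g' * q + g * q') (g'' * q + 2 * (g' * q') + g * q'') =
      q * spectralOperator ρ g g' g'' +
        ((ρ ^ 2 - 1) * (2 * (g' * q') + g * q'') + (6 * ρ - 4 / ρ) * (g * q')) := by
  unfold spectralOperator
  ring

theorem spectralOperator_firstSolution {ρ : ℝ} (hρ : ρ ≠ 0) :
    spectralOperator ρ (firstSolution ρ) (firstSolution' ρ) (firstSolution'' ρ) = 0 := by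
  unfold spectralOperator firstSolution firstSolution' firstSolution''
  field_simp
  ring

-- Abel's equation `(ρ² - 1) W' + (6ρ - 4/ρ) W = 0` for `W = g₁² q'`, divided by `g₁`.
theorem abel_firstSolution_sq_mul_reductionFactor' {ρ : ℝ} (hρ0 : ρ ≠ 0) (hρ1 : 1 - ρ ^ 2 ≠ 0) :
    (ρ ^ 2 - 1) * (2 * (firstSolution' ρ * reductionFactor' ρ) +
        firstSolution ρ * reductionFactor'' ρ) +
      (6 * ρ - 4 / ρ) * (firstSolution ρ * reductionFactor' ρ) = 0 := by
  unfold firstSolution firstSolution' reductionFactor' reductionFactor''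
  field_simp
  ring

/-- The function `g̃₁(ρ) = (12ρ³ arctanh ρ − 9ρ² − 1)/(ρ³(ρ² + 1))` solves
`(ρ² − 1)u'' + (6ρ − 4/ρ)u' + 6u − (16/(1 + ρ²)²)u = 0` on `(0,1)`, and with
`g₁(ρ) = 1/(1 + ρ²)` the Wronskian satisfies `g₁g̃₁' − g₁'g̃₁ = 3/(ρ⁴(1 − ρ²))`. -/
theorem stmt_6 (g₁ gt₁ : ℝ → ℝ)
    (hg₁ : ∀ ρ : ℝ, g₁ ρ = 1 / (1 + ρ ^ 2))
    (hgt₁ : ∀ ρ : ℝ, gt₁ ρ = (12 * ρ ^ 3 * arctanh ρ - 9 * ρ ^ 2 - 1) / (ρ ^ 3 * (ρ ^ 2 + 1))) :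
    ∀ ρ ∈ Ioo (0:ℝ) 1,
      ((ρ ^ 2 - 1) * deriv (deriv gt₁) ρ + (6 * ρ - 4 / ρ) * deriv gt₁ ρ + 6 * gt₁ ρ
        - 16 / (1 + ρ ^ 2) ^ 2 * gt₁ ρ = 0) ∧
      g₁ ρ * deriv gt₁ ρ - deriv g₁ ρ * gt₁ ρ = 3 / (ρ ^ 4 * (1 - ρ ^ 2)) := by
  intro ρ hρ
  obtain rfl : g₁ = firstSolution := funext hg₁
  obtain rfl : gt₁ = firstSolution * reductionFactor :=
    (funext hgt₁).trans firstSolution_mul_reductionFactor.symm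
  have hρ0 : ρ ≠ 0 := hρ.1.ne'
  have hρ1 : 1 - ρ ^ 2 ≠ 0 := by nlinarith [hρ.1, hρ.2]
  obtain ⟨hd, hdd⟩ := deriv_and_deriv_deriv_mul isOpen_Ioo (fun x _ => hasDerivAt_firstSolution x)
    (fun x _ => hasDerivAt_firstSolution' x)
    (fun x hx => hasDerivAt_reductionFactor ⟨by linarith [hx.1], hx.2⟩ hx.1.ne')
    (fun x hx => hasDerivAt_reductionFactor' hx.1.ne' (by nlinarith [hx.1, hx.2])) hρ
  rw [hd, hdd, (hasDerivAt_firstSolution ρ).deriv, Pi.mul_apply]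
  constructor
  · change spectralOperator ρ _ _ _ = 0
    rw [spectralOperator_mul, spectralOperator_firstSolution hρ0,
      abel_firstSolution_sq_mul_reductionFactor' hρ0 hρ1]
    ring
  · rw [← firstSolution_sq_mul_reductionFactor' hρ0 hρ1]
    ring
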